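/- arXiv:2404.09441 — 6 statements merged into one kernel-verified Lean document; each statement's English description precedes it below -/
import Mathlib

section
/- Given squeezer gain G ≥ 1, beamsplitter parameters κ, η ≥ 0 with κ + η ≤ 1, and antisqueezer gain G' = 1/(1 - κ + κ/G), the coefficient √(G κ G') - √((G'-1)(G-1)) of the output vacuum probe mode satisfies (√(GκG') - √((G'-1)(G-1)))² + ηG' + (1-η-κ)G' = 1, i.e., the total output is a valid beamsplitter mixing of signal with vacuum. -/
open Real

theorem stmt0 (G κ η G' : ℝ) (hG : 1 ≤ G) (hκ : 0 ≤ κ) (hη : 0 ≤ η)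
    (hsum : κ + η ≤ 1) (hG' : G' = 1 / (1 - κ + κ / G)) :
    (Real.sqrt (G * κ * G') - Real.sqrt ((G' - 1) * (G - 1)))^2
      + η * G' + (1 - η - κ) * G' = 1 := by
  have hGpos : (0:ℝ) < G := lt_of_lt_of_le one_pos hG
  have hGne : G ≠ 0 := hGpos.ne'
  have hκ1 : κ ≤ 1 := by linarith
  have hD : 0 < 1 - κ + κ / G := by
    rcases eq_or_lt_of_le hκ with h | h
    · simp [← h]
    · have := div_pos h hGpos
      linarith
  have hDne : 1 - κ + κ / G ≠ 0 := hD.ne'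
  have hE : 0 < G - G * κ + κ := by
    rcases eq_or_lt_of_le hκ with h | h
    · simp [← h]; linarith
    · nlinarith [mul_nonneg hGpos.le (by linarith : (0:ℝ) ≤ 1 - κ)]
  have hE2 : (0:ℝ) < κ - κ * G + G := by linarith
  have hx : 0 ≤ κ / (G * (1 - κ + κ / G)) := div_nonneg hκ (by positivity)
  have h1 : G * κ * G' = G ^ 2 * (κ / (G * (1 - κ + κ / G))) := by
    rw [hG']; field_simp [hE.ne', hE2.ne']
  have hinv : (G - G * κ + κ) * (G - G * κ + κ)⁻¹ = 1 := mul_inv_cancel₀ hE.ne'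
  have hinv2 : (κ - κ * G + G) * (κ - κ * G + G)⁻¹ = 1 := mul_inv_cancel₀ hE2.ne'
  have h2 : (G' - 1) * (G - 1) = (G - 1) ^ 2 * (κ / (G * (1 - κ + κ / G))) := by
    rw [hG']; field_simp [hE.ne', hE2.ne']; linear_combination (G - 1) * hinv
  have hs1 : Real.sqrt (G * κ * G') = G * Real.sqrt (κ / (G * (1 - κ + κ / G))) := by
    rw [h1, Real.sqrt_mul (sq_nonneg G), Real.sqrt_sq hGpos.le]
  have hs2 : Real.sqrt ((G' - 1) * (G - 1))
      = (G - 1) * Real.sqrt (κ / (G * (1 - κ + κ / G))) := by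
    rw [h2, Real.sqrt_mul (sq_nonneg _), Real.sqrt_sq (by linarith)]
  rw [hs1, hs2]
  have hsq : (G * Real.sqrt (κ / (G * (1 - κ + κ / G)))
      - (G - 1) * Real.sqrt (κ / (G * (1 - κ + κ / G)))) ^ 2
      = κ / (G * (1 - κ + κ / G)) := by
    have h : G * Real.sqrt (κ / (G * (1 - κ + κ / G)))
        - (G - 1) * Real.sqrt (κ / (G * (1 - κ + κ / G)))
        = Real.sqrt (κ / (G * (1 - κ + κ / G))) := by ring
    rw [h, Real.sq_sqrt hx]
  rw [hsq, hG']
  field_simp [hE.ne', hE2.ne']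
  linear_combination hinv2
end

section
/- Let Γ_P, Γ_S > 0, ζ_P, ζ_S ∈ (0,1], C > 0, and define η(ω) = 4CΓ_P²Γ_S²ζ_Pζ_S / [(C+1)²Γ_P²Γ_S² + 4ω²(Γ_P² + Γ_S² - 2CΓ_PΓ_S) + 16ω⁴]. Then ∫_{-∞}^{∞} η(ω) dω = 2πCΓ_PΓ_Sζ_Pζ_S / [(C+1)(Γ_P+Γ_S)]. -/
/-!
With `u = 2ω` the denominator of `η` is `(u² - A)² + σ²u²`, where `A = (C + 1) Γ_P Γ_S` and
`σ = Γ_P + Γ_S`. On `(0, ∞)` the Cauchy–Schlömilch substitution `t = u - A / u` turns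
`(u² + A) / ((u² - A)² + σ²u²)` into the Lorentzian `1 / (t² + σ²)`, of integral `π / σ`, while the
inversion `u ↦ A / u` shows that the parts `u²` and `A` of the numerator contribute equally.
Hence `∫₀^∞ du / ((u² - A)² + σ²u²) = π / (2σA)`, and evenness doubles this.
-/

open Real MeasureTheory Set

section Substitutions

variable {E : Type*} [NormedAddCommGroup E] [NormedSpace ℝ E] {A : ℝ}

lemma hasDerivAt_const_div {u : ℝ} (hu : u ≠ 0) :
    HasDerivAt (fun x : ℝ => A / x) (-(A / u ^ 2)) u := by
  simpa [div_eq_mul_inv] using (hasDerivAt_inv hu).const_mul A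

lemma image_sub_div_Ioi (hA : 0 < A) : (fun u : ℝ => u - A / u) '' Ioi 0 = univ := by
  refine eq_univ_of_forall fun t => ?_
  have hs : √(t ^ 2 + 4 * A) ^ 2 = t ^ 2 + 4 * A := sq_sqrt (by positivity)
  have ht : |t| < √(t ^ 2 + 4 * A) := by
    rw [← sqrt_sq_eq_abs]; exact sqrt_lt_sqrt (sq_nonneg t) (by linarith)
  have hu : 0 < (t + √(t ^ 2 + 4 * A)) / 2 := by linarith [neg_abs_le t]
  refine ⟨_, hu, ?_⟩
  have : t + √(t ^ 2 + 4 * A) ≠ 0 := by linarith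
  field_simp
  linear_combination hs

lemma injOn_sub_div_Ioi (hA : 0 < A) : InjOn (fun u : ℝ => u - A / u) (Ioi 0) := by
  intro u (hu : 0 < u) v (hv : 0 < v) h
  field_simp at h
  have : (u - v) * (u * v + A) = 0 := by linear_combination h
  have : u * v + A ≠ 0 := by positivity
  simp_all [sub_eq_zero]

lemma image_div_Ioi (hA : 0 < A) : (fun u : ℝ => A / u) '' Ioi 0 = Ioi 0 := by
  refine Subset.antisymm (image_subset_iff.2 fun u (hu : 0 < u) => div_pos hA hu) fun t ht => ?_
  exact ⟨A / t, div_pos hA ht, div_div_cancel₀ hA.ne'⟩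

lemma injOn_div_Ioi (hA : 0 < A) : InjOn (fun u : ℝ => A / u) (Ioi 0) :=
  fun _ _ _ _ h => by simpa [div_eq_mul_inv, hA.ne'] using h

lemma hasDerivWithinAt_sub_div_Ioi {u : ℝ} (hu : u ∈ Ioi (0 : ℝ)) :
    HasDerivWithinAt (fun x : ℝ => x - A / x) (1 + A / u ^ 2) (Ioi 0) u := by
  simpa using
    ((hasDerivAt_id' u).fun_sub (hasDerivAt_const_div (A := A) hu.out.ne')).hasDerivWithinAt

lemma abs_one_add_div_sq (hA : 0 < A) {u : ℝ} (hu : u ∈ Ioi (0 : ℝ)) :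
    |1 + A / u ^ 2| = 1 + A / u ^ 2 :=
  abs_of_pos (by have := hu.out; positivity)

lemma integral_Ioi_comp_sub_div (hA : 0 < A) (f : ℝ → E) :
    ∫ u in Ioi 0, (1 + A / u ^ 2) • f (u - A / u) = ∫ t, f t := by
  conv_rhs => rw [← setIntegral_univ, ← image_sub_div_Ioi hA]
  rw [integral_image_eq_integral_abs_deriv_smul measurableSet_Ioi
      (fun u hu => hasDerivWithinAt_sub_div_Ioi hu) (injOn_sub_div_Ioi hA)]
  exact setIntegral_congr_fun measurableSet_Ioi fun u hu => by rw [abs_one_add_div_sq hA hu]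

lemma integrableOn_Ioi_comp_sub_div_iff (hA : 0 < A) (f : ℝ → E) :
    IntegrableOn (fun u => (1 + A / u ^ 2) • f (u - A / u)) (Ioi 0) ↔ Integrable f := by
  conv_rhs => rw [← integrableOn_univ, ← image_sub_div_Ioi hA]
  rw [integrableOn_image_iff_integrableOn_abs_deriv_smul measurableSet_Ioi
      (fun u hu => hasDerivWithinAt_sub_div_Ioi hu) (injOn_sub_div_Ioi hA)]
  exact integrableOn_congr_fun (fun u hu => by rw [abs_one_add_div_sq hA hu]) measurableSet_Ioi

lemma integral_Ioi_comp_div (hA : 0 < A) (f : ℝ → E) :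
    ∫ u in Ioi 0, (A / u ^ 2) • f (A / u) = ∫ u in Ioi 0, f u := by
  conv_rhs => rw [← image_div_Ioi hA]
  rw [integral_image_eq_integral_abs_deriv_smul measurableSet_Ioi
      (fun u hu => (hasDerivAt_const_div (A := A) (ne_of_gt hu)).hasDerivWithinAt)
      (injOn_div_Ioi hA)]
  refine setIntegral_congr_fun measurableSet_Ioi fun u (hu : 0 < u) => ?_
  rw [abs_neg, abs_of_pos (by positivity)]

end Substitutions

lemma inv_sq_add_sq_eq {σ : ℝ} (hσ : σ ≠ 0) :
    (fun t : ℝ => (t ^ 2 + σ ^ 2)⁻¹) = fun t => σ⁻¹ ^ 2 * (1 + (t / σ) ^ 2)⁻¹ := by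
  ext t
  field_simp
  ring

lemma integrable_inv_sq_add_sq {σ : ℝ} (hσ : σ ≠ 0) : Integrable fun t : ℝ => (t ^ 2 + σ ^ 2)⁻¹ := by
  rw [inv_sq_add_sq_eq hσ]
  exact (integrable_inv_one_add_sq.comp_div hσ).const_mul _

lemma integral_univ_inv_sq_add_sq {σ : ℝ} (hσ : 0 < σ) : ∫ t : ℝ, (t ^ 2 + σ ^ 2)⁻¹ = π / σ := by
  rw [inv_sq_add_sq_eq hσ.ne', integral_const_mul,
    Measure.integral_comp_div (fun t => (1 + t ^ 2)⁻¹), integral_univ_inv_one_add_sq,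
    smul_eq_mul, abs_of_pos hσ]
  field_simp

section Quartic

variable {A σ : ℝ}

lemma quartic_pos (hA : A ≠ 0) (hσ : σ ≠ 0) (u : ℝ) : 0 < (u ^ 2 - A) ^ 2 + σ ^ 2 * u ^ 2 := by
  rcases eq_or_ne u 0 with rfl | hu
  · norm_num
    positivity
  · positivity

lemma continuous_inv_quartic (hA : A ≠ 0) (hσ : σ ≠ 0) :
    Continuous fun u : ℝ => ((u ^ 2 - A) ^ 2 + σ ^ 2 * u ^ 2)⁻¹ :=
  (by fun_prop : Continuous fun u : ℝ => (u ^ 2 - A) ^ 2 + σ ^ 2 * u ^ 2).inv₀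
    fun u => (quartic_pos hA hσ u).ne'

lemma sq_add_mul_inv_quartic_eq (hA : A ≠ 0) (hσ : σ ≠ 0) {u : ℝ} (hu : u ≠ 0) :
    (1 + A / u ^ 2) • ((u - A / u) ^ 2 + σ ^ 2)⁻¹
      = (u ^ 2 + A) * ((u ^ 2 - A) ^ 2 + σ ^ 2 * u ^ 2)⁻¹ := by
  have := (quartic_pos hA hσ u).ne'
  rw [smul_eq_mul]
  field_simp

lemma integrableOn_Ioi_sq_add_mul_inv_quartic (hA : 0 < A) (hσ : 0 < σ) :
    IntegrableOn (fun u => (u ^ 2 + A) * ((u ^ 2 - A) ^ 2 + σ ^ 2 * u ^ 2)⁻¹) (Ioi 0) :=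
  ((integrableOn_Ioi_comp_sub_div_iff hA _).2 (integrable_inv_sq_add_sq hσ.ne')).congr_fun
    (fun _ hu => sq_add_mul_inv_quartic_eq hA.ne' hσ.ne' (ne_of_gt hu)) measurableSet_Ioi

lemma integral_Ioi_sq_add_mul_inv_quartic (hA : 0 < A) (hσ : 0 < σ) :
    ∫ u in Ioi 0, (u ^ 2 + A) * ((u ^ 2 - A) ^ 2 + σ ^ 2 * u ^ 2)⁻¹ = π / σ := by
  rw [← integral_univ_inv_sq_add_sq hσ, ← integral_Ioi_comp_sub_div hA]
  exact setIntegral_congr_fun measurableSet_Ioi fun _ hu =>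
    (sq_add_mul_inv_quartic_eq hA.ne' hσ.ne' (ne_of_gt hu)).symm

lemma integral_Ioi_sq_mul_inv_quartic (hA : 0 < A) (hσ : σ ≠ 0) :
    ∫ u in Ioi 0, u ^ 2 * ((u ^ 2 - A) ^ 2 + σ ^ 2 * u ^ 2)⁻¹
      = A * ∫ u in Ioi 0, ((u ^ 2 - A) ^ 2 + σ ^ 2 * u ^ 2)⁻¹ := by
  rw [← integral_Ioi_comp_div hA, ← integral_const_mul]
  refine setIntegral_congr_fun measurableSet_Ioi fun u (hu : 0 < u) => ?_
  have := (quartic_pos hA.ne' hσ u).ne'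
  rw [smul_eq_mul]
  field_simp
  ring

lemma integrableOn_Ioi_inv_quartic (hA : 0 < A) (hσ : 0 < σ) :
    IntegrableOn (fun u => ((u ^ 2 - A) ^ 2 + σ ^ 2 * u ^ 2)⁻¹) (Ioi 0) := by
  refine ((integrableOn_Ioi_sq_add_mul_inv_quartic hA hσ).const_mul A⁻¹).mono'
    (continuous_inv_quartic hA.ne' hσ.ne').aestronglyMeasurable (ae_of_all _ fun u => ?_)
  have := quartic_pos hA.ne' hσ.ne' u
  rw [norm_inv, Real.norm_of_nonneg this.le, ← mul_assoc, inv_mul_eq_div, add_div,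
    div_self hA.ne']
  exact le_mul_of_one_le_left (by positivity) (by linarith [div_nonneg (sq_nonneg u) hA.le])

lemma integral_Ioi_inv_quartic (hA : 0 < A) (hσ : 0 < σ) :
    ∫ u in Ioi 0, ((u ^ 2 - A) ^ 2 + σ ^ 2 * u ^ 2)⁻¹ = π / (2 * σ * A) := by
  have hD := integrableOn_Ioi_inv_quartic hA hσ
  have hsq : IntegrableOn (fun u => u ^ 2 * ((u ^ 2 - A) ^ 2 + σ ^ 2 * u ^ 2)⁻¹) (Ioi 0) :=
    ((integrableOn_Ioi_sq_add_mul_inv_quartic hA hσ).sub (hD.const_mul A)).congr_fun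
      (fun u _ => by simp only [Pi.sub_apply]; ring) measurableSet_Ioi
  have hsplit := integral_Ioi_sq_add_mul_inv_quartic hA hσ
  rw [integral_congr_ae (ae_of_all _ fun u => add_mul (u ^ 2) A _),
    integral_add hsq (hD.const_mul A), integral_Ioi_sq_mul_inv_quartic hA hσ.ne',
    integral_const_mul] at hsplit
  rw [eq_div_iff (by positivity), ← div_mul_cancel₀ π hσ.ne', ← hsplit]
  ring

lemma integral_inv_quartic (hA : 0 < A) (hσ : 0 < σ) :
    ∫ u, ((u ^ 2 - A) ^ 2 + σ ^ 2 * u ^ 2)⁻¹ = π / (σ * A) := by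
  have h := integral_comp_abs (f := fun u => ((u ^ 2 - A) ^ 2 + σ ^ 2 * u ^ 2)⁻¹)
  simp only [sq_abs] at h
  rw [h, integral_Ioi_inv_quartic hA hσ]
  field_simp

end Quartic

theorem stmt7_general (ΓP ΓS ζP ζS C : ℝ) (hΓP : 0 < ΓP) (hΓS : 0 < ΓS) (hC : 0 < C) :
    ∫ ω : ℝ, 4 * C * ΓP^2 * ΓS^2 * ζP * ζS /
        ((C + 1)^2 * ΓP^2 * ΓS^2 + 4 * ω^2 * (ΓP^2 + ΓS^2 - 2 * C * ΓP * ΓS)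
          + 16 * ω^4)
      = 2 * π * C * ΓP * ΓS * ζP * ζS / ((C + 1) * (ΓP + ΓS)) := by
  have hA : 0 < (C + 1) * ΓP * ΓS := by positivity
  have hσ : 0 < ΓP + ΓS := by positivity
  have hden : ∀ ω : ℝ, (C + 1)^2 * ΓP^2 * ΓS^2 + 4 * ω^2 * (ΓP^2 + ΓS^2 - 2 * C * ΓP * ΓS)
      + 16 * ω^4 = ((2 * ω) ^ 2 - (C + 1) * ΓP * ΓS) ^ 2 + (ΓP + ΓS) ^ 2 * (2 * ω) ^ 2 :=
    fun ω => by ring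
  simp_rw [hden, div_eq_mul_inv, integral_const_mul,
    Measure.integral_comp_mul_left (fun u => ((u ^ 2 - (C + 1) * ΓP * ΓS) ^ 2
      + (ΓP + ΓS) ^ 2 * u ^ 2)⁻¹) 2, integral_inv_quartic hA hσ, smul_eq_mul]
  field_simp
  ring

theorem stmt7 (ΓP ΓS ζP ζS C : ℝ) (hΓP : 0 < ΓP) (hΓS : 0 < ΓS)
    (hζP : ζP ∈ Set.Ioc (0:ℝ) 1) (hζS : ζS ∈ Set.Ioc (0:ℝ) 1) (hC : 0 < C) :
    ∫ ω : ℝ, 4 * C * ΓP^2 * ΓS^2 * ζP * ζS /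
        ((C + 1)^2 * ΓP^2 * ΓS^2 + 4 * ω^2 * (ΓP^2 + ΓS^2 - 2 * C * ΓP * ΓS)
          + 16 * ω^4)
      = 2 * π * C * ΓP * ΓS * ζP * ζS / ((C + 1) * (ΓP + ΓS)) :=
  stmt7_general ΓP ΓS ζP ζS C hΓP hΓS hC
end

section
/- Fix g, α with |gα| > 0 and ζ_P, ζ_S ∈ (0,1]. With C = 4|gα|²/(Γ_SΓ_P), the EBP B(Γ_P,Γ_S) = 2πCΓ_PΓ_Sζ_Pζ_S / [(C+1)(Γ_P+Γ_S)] satisfies B ≤ πζ_Pζ_S|gα| ≤ π|gα| for all Γ_P, Γ_S > 0, with equality B = πζ_Pζ_S|gα| attained at Γ_P = Γ_S = 2|gα| (i.e. C = 1). -/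
open Real

theorem stmt8 (g α ζP ζS : ℝ) (hgα : 0 < |g * α|)
    (hζP : ζP ∈ Set.Ioc (0:ℝ) 1) (hζS : ζS ∈ Set.Ioc (0:ℝ) 1) :
    (∀ ΓP ΓS : ℝ, 0 < ΓP → 0 < ΓS →
      2 * π * (4 * |g * α|^2 / (ΓS * ΓP)) * ΓP * ΓS * ζP * ζS /
          ((4 * |g * α|^2 / (ΓS * ΓP) + 1) * (ΓP + ΓS))
        ≤ π * ζP * ζS * |g * α|) ∧
    π * ζP * ζS * |g * α| ≤ π * |g * α| ∧
    2 * π * (4 * |g * α|^2 / ((2 * |g * α|) * (2 * |g * α|))) * (2 * |g * α|)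
        * (2 * |g * α|) * ζP * ζS /
        ((4 * |g * α|^2 / ((2 * |g * α|) * (2 * |g * α|)) + 1)
          * (2 * |g * α| + 2 * |g * α|))
      = π * ζP * ζS * |g * α| := by
  obtain ⟨hζP0, hζP1⟩ := hζP
  obtain ⟨hζS0, hζS1⟩ := hζS
  set a := |g * α| with ha
  have hπ : (0:ℝ) < π := Real.pi_pos
  refine ⟨?_, ?_, ?_⟩
  · intro ΓP ΓS hP hS
    have hden : (0:ℝ) < (4 * a^2 / (ΓS * ΓP) + 1) * (ΓP + ΓS) := by positivity
    have key : ΓS * (2*a - ΓP)^2 + ΓP * (2*a - ΓS)^2 ≥ 0 := by positivity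
    have e1 : 2 * π * (4 * a^2 / (ΓS * ΓP)) * ΓP * ΓS * ζP * ζS /
          ((4 * a^2 / (ΓS * ΓP) + 1) * (ΓP + ΓS))
        = (8 * π * a^2 * ζP * ζS * (ΓP * ΓS)) /
          ((4 * a^2 + ΓS * ΓP) * (ΓP + ΓS)) := by
      rw [div_eq_div_iff hden.ne' (by positivity)]
      field_simp
      ring
    rw [e1, div_le_iff₀ (by positivity)]
    nlinarith [mul_pos hP hS,
      mul_nonneg (mul_nonneg (le_of_lt hπ) (mul_nonneg hζP0.le hζS0.le)) key]
  · have : ζP * ζS ≤ 1 := by nlinarith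
    nlinarith [mul_pos hπ hgα]
  · have h2a : (0:ℝ) < 2 * a := by linarith
    field_simp
    ring
end

section
/- Let G ≥ 1 and set Γ̃_P = Γ̃_S = 2 (i.e., Γ_P = Γ_S = 2|gα|). Then the EA efficiency-bandwidth product B_EA = 8πΓ̃_PΓ̃_SG|gα| / √[(Γ̃_PΓ̃_S(Γ̃_PΓ̃_S+16G-8)+16)(Γ̃_P²+Γ̃_S²+2√(Γ̃_PΓ̃_S(Γ̃_PΓ̃_S+16G-8)+16)-8)] equals G^{1/4}·π|gα|. -/
open Real

theorem stmt10 (G gα tP tS : ℝ) (hG : 1 ≤ G) (hgα : 0 < gα)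
    (htP : tP = 2) (htS : tS = 2) :
    8 * π * tP * tS * G * gα /
        Real.sqrt ((tP * tS * (tP * tS + 16 * G - 8) + 16) *
          (tP^2 + tS^2 + 2 * Real.sqrt (tP * tS * (tP * tS + 16 * G - 8) + 16) - 8))
      = G ^ ((1:ℝ)/4) * π * gα := by
  subst htP htS
  have hGpos : (0:ℝ) < G := lt_of_lt_of_le one_pos hG
  set s := Real.sqrt G with hs
  have hspos : 0 < s := Real.sqrt_pos.mpr hGpos
  have hs2 : s ^ 2 = G := Real.sq_sqrt hGpos.le
  set t := Real.sqrt s with ht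
  have htpos : 0 < t := Real.sqrt_pos.mpr hspos
  have ht2 : t ^ 2 = s := Real.sq_sqrt hspos.le
  have h1 : (2 * 2 * (2 * 2 + 16 * G - 8) + 16 : ℝ) = 64 * G := by ring
  have h2 : Real.sqrt (2 * 2 * (2 * 2 + 16 * G - 8) + 16) = 8 * s := by
    rw [h1, show (64 : ℝ) * G = (8 * s)^2 by rw [mul_pow, hs2]; ring,
      Real.sqrt_sq (by positivity)]
  rw [h2]
  have h3 : ((2*2*(2*2+16*G-8)+16) * ((2:ℝ)^2 + 2^2 + 2*(8*s) - 8))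
      = (32 * s * t)^2 := by
    rw [h1, ← hs2, ← ht2]; ring
  rw [h3, Real.sqrt_sq (by positivity)]
  have h4 : G ^ ((1:ℝ)/4) = t := by
    rw [ht, hs, Real.sqrt_eq_rpow, Real.sqrt_eq_rpow, ← Real.rpow_mul hGpos.le]
    norm_num
  rw [h4, ← hs2, ← ht2]
  field_simp
  ring
end

section
/- At the overcoupling limit ζ_P = ζ_S = 1, the entanglement-assisted cooperativity threshold C_th,EA = -1 + (4ζ_S - 2)ζ_P G + 2ζ_P - 2√(ζ_P G(ζ_P(4ζ_S + (1-2ζ_S)²G - 1) - 2ζ_S)) simplifies to C_th,EA = 1/(√G + √(1+G))² for all G ≥ 1. -/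
open Real

theorem stmt12 (G ζP ζS : ℝ) (hG : 1 ≤ G) (hζP : ζP = 1) (hζS : ζS = 1) :
    -1 + (4 * ζS - 2) * ζP * G + 2 * ζP -
        2 * Real.sqrt (ζP * G * (ζP * (4 * ζS + (1 - 2 * ζS)^2 * G - 1) - 2 * ζS))
      = 1 / (Real.sqrt G + Real.sqrt (1 + G))^2 := by
  subst hζP hζS
  have hG0 : (0:ℝ) ≤ G := by linarith
  have hG1 : (0:ℝ) ≤ 1 + G := by linarith
  have h1 : 1 * G * (1 * (4 * 1 + (1 - 2 * 1)^2 * G - 1) - 2 * 1) = G * (1 + G) := by ring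
  rw [h1, Real.sqrt_mul hG0]
  set a := Real.sqrt G
  set b := Real.sqrt (1 + G)
  have ha : a ^ 2 = G := Real.sq_sqrt hG0
  have hb : b ^ 2 = 1 + G := Real.sq_sqrt hG1
  have ha0 : 0 ≤ a := Real.sqrt_nonneg _
  have hb0 : 0 < b := Real.sqrt_pos.mpr (by linarith)
  have hab : (a + b) ^ 2 ≠ 0 := by positivity
  field_simp
  nlinarith [sq_nonneg (a+b), sq_nonneg (a*b)]
end

section
/- Let G_max = √(107 + 51√17)/32 · π. In the symmetric coupling case G_P = G_S = 𝒢, with ζ_P = ζ_S = 1 and Γ_M → 0, the EBP B^emo(Γ_P, Γ_S) = 8π𝒢⁴Γ_P²Γ_S²(4𝒢²Γ_S + 4𝒢²Γ_P + Γ_PΓ_S(Γ_P+Γ_S)) / [(Γ_P+Γ_S)(𝒢²Γ_S+𝒢²Γ_P)(4𝒢²Γ_S + Γ_P(4𝒢²+Γ_PΓ_S))(4𝒢²Γ_S + Γ_P(4𝒢²+Γ_S²))] satisfies sup_{Γ_P, Γ_S > 0} B^emo(Γ_P, Γ_S) = G_max · 𝒢 = √(107+51√17)/32 · π · 𝒢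 ≈ 1.749𝒢. -/
open Real

set_option maxHeartbeats 2000000

theorem stmt17 (𝒢 : ℝ) (h𝒢 : 0 < 𝒢) :
    IsLUB {b : ℝ | ∃ ΓP ΓS : ℝ, 0 < ΓP ∧ 0 < ΓS ∧
        b = 8 * π * 𝒢^4 * ΓP^2 * ΓS^2 *
              (4 * 𝒢^2 * ΓS + 4 * 𝒢^2 * ΓP + ΓP * ΓS * (ΓP + ΓS)) /
            ((ΓP + ΓS) * (𝒢^2 * ΓS + 𝒢^2 * ΓP) *
              (4 * 𝒢^2 * ΓS + ΓP * (4 * 𝒢^2 + ΓP * ΓS)) *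
              (4 * 𝒢^2 * ΓS + ΓP * (4 * 𝒢^2 + ΓS^2)))}
      (Real.sqrt (107 + 51 * Real.sqrt 17) / 32 * π * 𝒢) := by
  have hπ : (0:ℝ) < π := Real.pi_pos
  set w : ℝ := Real.sqrt 17 with hwdef
  have hw0 : 0 ≤ w := Real.sqrt_nonneg 17
  have hw : w ^ 2 = 17 := Real.sq_sqrt (by norm_num)
  have hw4 : 4 ≤ w := by nlinarith
  have h107 : (0:ℝ) ≤ 107 + 51 * w := by linarith
  set c : ℝ := Real.sqrt (107 + 51 * w) / 32 with hcdef
  have hc0 : 0 < c := by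
    rw [hcdef]
    positivity
  have hc2 : c ^ 2 = (107 + 51 * w) / 1024 := by
    rw [hcdef, div_pow, Real.sq_sqrt h107]; norm_num
  -- key one-variable (homogeneous) inequality
  have key : ∀ g t : ℝ, 0 ≤ g → 0 ≤ t →
      4 * g * t * (4 * g ^ 2 + t ^ 2) ≤ c * (8 * g ^ 2 + t ^ 2) ^ 2 := by
    intro g t hg ht
    have hfac : (107 + 51 * w) * (t ^ 2 + 8 * g ^ 2) ^ 4
        - 16384 * t ^ 2 * g ^ 2 * (t ^ 2 + 4 * g ^ 2) ^ 2
        = (t ^ 2 - (6 + 2 * w) * g ^ 2) ^ 2 *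
          ((107 + 51 * w) * (t ^ 2) ^ 2 + (2672 * w - 8208) * t ^ 2 * g ^ 2
            + (10944 * w - 38720) * (g ^ 2) ^ 2) := by
      linear_combination (204 * (t ^ 2) ^ 3 * g ^ 2 + 9036 * (t ^ 2) ^ 2 * (g ^ 2) ^ 2
        + 12480 * t ^ 2 * (g ^ 2) ^ 3 - 107776 * (g ^ 2) ^ 4
        - 204 * (t ^ 2) ^ 2 * (g ^ 2) ^ 2 * w - 10688 * t ^ 2 * (g ^ 2) ^ 3 * w
        - 43776 * (g ^ 2) ^ 4 * w) * hw
    have hQ : 0 ≤ (107 + 51 * w) * (t ^ 2) ^ 2 + (2672 * w - 8208) * t ^ 2 * g ^ 2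
        + (10944 * w - 38720) * (g ^ 2) ^ 2 := by
      have h1 : 0 ≤ t ^ 2 * g ^ 2 := by positivity
      nlinarith [sq_nonneg (t ^ 2), sq_nonneg (g ^ 2)]
    have hprod : 0 ≤ (t ^ 2 - (6 + 2 * w) * g ^ 2) ^ 2 *
          ((107 + 51 * w) * (t ^ 2) ^ 2 + (2672 * w - 8208) * t ^ 2 * g ^ 2
            + (10944 * w - 38720) * (g ^ 2) ^ 2) := mul_nonneg (sq_nonneg _) hQ
    have h2 : 16384 * t ^ 2 * g ^ 2 * (t ^ 2 + 4 * g ^ 2) ^ 2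
        ≤ (107 + 51 * w) * (t ^ 2 + 8 * g ^ 2) ^ 4 := by linarith
    have hsq : (4 * g * t * (4 * g ^ 2 + t ^ 2)) ^ 2 ≤ (c * (8 * g ^ 2 + t ^ 2) ^ 2) ^ 2 := by
      have e1 : (4 * g * t * (4 * g ^ 2 + t ^ 2)) ^ 2
          = 16384 * t ^ 2 * g ^ 2 * (t ^ 2 + 4 * g ^ 2) ^ 2 / 1024 := by ring
      have e2 : (c * (8 * g ^ 2 + t ^ 2) ^ 2) ^ 2
          = (107 + 51 * w) * (t ^ 2 + 8 * g ^ 2) ^ 4 / 1024 := by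
        linear_combination ((8 * g ^ 2 + t ^ 2) ^ 2) ^ 2 * hc2
      rw [e1, e2]
      linarith
    have hrhs0 : 0 ≤ c * (8 * g ^ 2 + t ^ 2) ^ 2 := by positivity
    calc 4 * g * t * (4 * g ^ 2 + t ^ 2)
        = Real.sqrt ((4 * g * t * (4 * g ^ 2 + t ^ 2)) ^ 2) := by
          rw [Real.sqrt_sq (by positivity)]
      _ ≤ Real.sqrt ((c * (8 * g ^ 2 + t ^ 2) ^ 2) ^ 2) := Real.sqrt_le_sqrt hsq
      _ = c * (8 * g ^ 2 + t ^ 2) ^ 2 := Real.sqrt_sq hrhs0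
  constructor
  · -- upper bound
    rintro b ⟨p, s, hp, hs, rfl⟩
    have hD : 0 < (p + s) * (𝒢 ^ 2 * s + 𝒢 ^ 2 * p) *
        (4 * 𝒢 ^ 2 * s + p * (4 * 𝒢 ^ 2 + p * s)) *
        (4 * 𝒢 ^ 2 * s + p * (4 * 𝒢 ^ 2 + s ^ 2)) := by
      have h1 : 0 < 𝒢 ^ 2 := by positivity
      have h2 : 0 < p * s := mul_pos hp hs
      have h3 : 0 < s ^ 2 := by positivity
      apply mul_pos (mul_pos (mul_pos (by linarith)
        (by nlinarith [mul_pos h1 hs, mul_pos h1 hp])) ?_) ?_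
      · nlinarith [mul_pos h1 hs, mul_pos hp (mul_pos h1 (by norm_num : (0:ℝ) < 4)), mul_pos hp h2]
      · nlinarith [mul_pos h1 hs, mul_pos hp h3, mul_pos hp (mul_pos h1 (by norm_num : (0:ℝ) < 4))]
    rw [div_le_iff₀ hD]
    set t : ℝ := Real.sqrt (p * s) with htdef
    have ht2 : t ^ 2 = p * s := Real.sq_sqrt (by positivity)
    have ht0 : 0 < t := Real.sqrt_pos.mpr (by positivity)
    have hu : 2 * t ≤ p + s := by nlinarith [sq_nonneg (p - s)]
    have hkey := key 𝒢 t h𝒢.le ht0.le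
    have hmain : 8 * 𝒢 ^ 2 * (p * s) ^ 2 * (4 * 𝒢 ^ 2 + p * s)
        ≤ c * 𝒢 * ((p + s) * (4 * 𝒢 ^ 2 * (p + s) + p ^ 2 * s) *
            (4 * 𝒢 ^ 2 * (p + s) + p * s ^ 2)) := by
      calc 8 * 𝒢 ^ 2 * (p * s) ^ 2 * (4 * 𝒢 ^ 2 + p * s)
          = (2 * 𝒢 * t ^ 3) * (4 * 𝒢 * t * (4 * 𝒢 ^ 2 + t ^ 2)) := by
            rw [← ht2]; ring
        _ ≤ (2 * 𝒢 * t ^ 3) * (c * (8 * 𝒢 ^ 2 + t ^ 2) ^ 2) := by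
            apply mul_le_mul_of_nonneg_left hkey (by positivity)
        _ = c * 𝒢 * ((2 * t) * ((16 * 𝒢 ^ 4 + 4 * 𝒢 ^ 2 * (p * s)) * (2 * t) ^ 2
              + (p * s) ^ 3)) := by rw [← ht2]; ring
        _ ≤ c * 𝒢 * ((p + s) * ((16 * 𝒢 ^ 4 + 4 * 𝒢 ^ 2 * (p * s)) * (p + s) ^ 2
              + (p * s) ^ 3)) := by
            have h2t : 0 ≤ 2 * t := by linarith
            have hps : 0 ≤ p * s := by positivity
            have hc𝒢 : 0 ≤ c * 𝒢 := by positivity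
            have hcoef : 0 ≤ 16 * 𝒢 ^ 4 + 4 * 𝒢 ^ 2 * (p * s) := by positivity
            have hsq : (2 * t) ^ 2 ≤ (p + s) ^ 2 := by nlinarith
            have hps3 : 0 ≤ (p * s) ^ 3 := by positivity
            apply mul_le_mul_of_nonneg_left _ hc𝒢
            have hinner : (16 * 𝒢 ^ 4 + 4 * 𝒢 ^ 2 * (p * s)) * (2 * t) ^ 2 + (p * s) ^ 3
                ≤ (16 * 𝒢 ^ 4 + 4 * 𝒢 ^ 2 * (p * s)) * (p + s) ^ 2 + (p * s) ^ 3 :=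
              add_le_add_left (mul_le_mul_of_nonneg_left hsq hcoef) _
            have hinner0 : 0 ≤ (16 * 𝒢 ^ 4 + 4 * 𝒢 ^ 2 * (p * s)) * (2 * t) ^ 2
                + (p * s) ^ 3 := by positivity
            calc (2 * t) * ((16 * 𝒢 ^ 4 + 4 * 𝒢 ^ 2 * (p * s)) * (2 * t) ^ 2 + (p * s) ^ 3)
                ≤ (p + s) * ((16 * 𝒢 ^ 4 + 4 * 𝒢 ^ 2 * (p * s)) * (2 * t) ^ 2
                    + (p * s) ^ 3) := mul_le_mul_of_nonneg_right hu hinner0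
              _ ≤ (p + s) * ((16 * 𝒢 ^ 4 + 4 * 𝒢 ^ 2 * (p * s)) * (p + s) ^ 2
                    + (p * s) ^ 3) := mul_le_mul_of_nonneg_left hinner (by linarith)
        _ = c * 𝒢 * ((p + s) * (4 * 𝒢 ^ 2 * (p + s) + p ^ 2 * s) *
              (4 * 𝒢 ^ 2 * (p + s) + p * s ^ 2)) := by ring
    calc 8 * π * 𝒢 ^ 4 * p ^ 2 * s ^ 2 * (4 * 𝒢 ^ 2 * s + 4 * 𝒢 ^ 2 * p + p * s * (p + s))
        = (π * 𝒢 ^ 2 * (p + s)) * (8 * 𝒢 ^ 2 * (p * s) ^ 2 * (4 * 𝒢 ^ 2 + p * s)) := by ring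
      _ ≤ (π * 𝒢 ^ 2 * (p + s)) * (c * 𝒢 * ((p + s) * (4 * 𝒢 ^ 2 * (p + s) + p ^ 2 * s) *
            (4 * 𝒢 ^ 2 * (p + s) + p * s ^ 2))) := by
          apply mul_le_mul_of_nonneg_left hmain
          have : 0 < p + s := by linarith
          positivity
      _ = c * π * 𝒢 * ((p + s) * (𝒢 ^ 2 * s + 𝒢 ^ 2 * p) *
            (4 * 𝒢 ^ 2 * s + p * (4 * 𝒢 ^ 2 + p * s)) *
            (4 * 𝒢 ^ 2 * s + p * (4 * 𝒢 ^ 2 + s ^ 2))) := by ring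
  · -- least upper bound: the value is attained
    intro ub hub
    have h62 : (0:ℝ) ≤ 6 + 2 * w := by linarith
    set τ : ℝ := Real.sqrt (6 + 2 * w) with hτdef
    have hτ2 : τ ^ 2 = 6 + 2 * w := Real.sq_sqrt h62
    have hτ0 : 0 < τ := Real.sqrt_pos.mpr (by linarith)
    -- the exact equality at the maximizer
    have h1 : (4 * τ * (4 + τ ^ 2)) ^ 2 = 16 * (6 + 2 * w) * (10 + 2 * w) ^ 2 := by
      linear_combination (16 * (τ ^ 4 + τ ^ 2 * (6 + 2 * w) + (6 + 2 * w) ^ 2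
        + 8 * τ ^ 2 + 8 * (6 + 2 * w) + 16)) * hτ2
    have h2 : (c * (8 + τ ^ 2) ^ 2) ^ 2 = (107 + 51 * w) / 1024 * (14 + 2 * w) ^ 4 := by
      linear_combination ((8 + τ ^ 2) ^ 2) ^ 2 * hc2
        + ((107 + 51 * w) / 1024 * ((8 + τ ^ 2) ^ 3 + (8 + τ ^ 2) ^ 2 * (14 + 2 * w)
            + (8 + τ ^ 2) * (14 + 2 * w) ^ 2 + (14 + 2 * w) ^ 3)) * hτ2
    have h3 : 16 * (6 + 2 * w) * (10 + 2 * w) ^ 2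
        = (107 + 51 * w) / 1024 * (14 + 2 * w) ^ 4 := by
      linear_combination (-(21029 / 64 : ℝ) - 10665 / 64 * w - 1535 / 64 * w ^ 2
        - 51 / 64 * w ^ 3) * hw
    have hE : 4 * τ * (4 + τ ^ 2) = c * (8 + τ ^ 2) ^ 2 := by
      have hsqeq : (4 * τ * (4 + τ ^ 2)) ^ 2 = (c * (8 + τ ^ 2) ^ 2) ^ 2 := by
        rw [h1, h2, h3]
      calc 4 * τ * (4 + τ ^ 2) = Real.sqrt ((4 * τ * (4 + τ ^ 2)) ^ 2) := by
            rw [Real.sqrt_sq (by positivity)]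
        _ = Real.sqrt ((c * (8 + τ ^ 2) ^ 2) ^ 2) := by rw [hsqeq]
        _ = c * (8 + τ ^ 2) ^ 2 := Real.sqrt_sq (by positivity)
    apply hub
    refine ⟨𝒢 * τ, 𝒢 * τ, by positivity, by positivity, ?_⟩
    have hΓ : 0 < 𝒢 * τ := by positivity
    have hD : ((𝒢 * τ + 𝒢 * τ) * (𝒢 ^ 2 * (𝒢 * τ) + 𝒢 ^ 2 * (𝒢 * τ)) *
        (4 * 𝒢 ^ 2 * (𝒢 * τ) + 𝒢 * τ * (4 * 𝒢 ^ 2 + 𝒢 * τ * (𝒢 * τ))) *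
        (4 * 𝒢 ^ 2 * (𝒢 * τ) + 𝒢 * τ * (4 * 𝒢 ^ 2 + (𝒢 * τ) ^ 2))) ≠ 0 := by
      positivity
    rw [eq_div_iff hD]
    linear_combination (-(4 * π * 𝒢 ^ 11 * τ ^ 4)) * hE
end
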